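/- arXiv:1411.1457 — 2 statements merged into one kernel-verified Lean document; each statement's English description precedes it below -/
import Mathlib

section
/- Let X be a set and let ν be a real-valued function on the group of bijections of X satisfying: ν(g) ≥ 0 for all g, ν(gh) ≤ ν(g) + ν(h) for all g, h, and ν(g⁻¹) = ν(g) for all g. Let φ, ψ be bijections of X and C_φ, C_ψ ≥ 0 constants such that ν(φ g φ⁻¹) ≤ C_φ·ν(g) and ν(ψ g ψ⁻¹) ≤ C_ψ·ν(g) for all bijections g. Suppose U ⊆ X is a subset with φ(x) = x and ψ(x) = x for every x ∉ U, and θ is a bijection of X with θ(U) ∩ U = ∅. Then ν(φψφ⁻¹ψ⁻¹) ≤ (C_φ + 1)(C_ψ + 1)·ν(θ). -/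
/-!
Conjugating `ψ⁻¹` by the displacing map `θ` gives a permutation supported in `θ(U)`, hence
commuting with `φ`. Since `ψ * (θ * ψ⁻¹ * θ⁻¹) = ⁅ψ, θ⁆`, this yields `⁅φ, ψ⁆ = ⁅φ, ⁅ψ, θ⁆⁆`.
For any `a` with `ν (a * g * a⁻¹) ≤ C * ν g`, subadditivity and symmetry give
`ν ⁅a, g⁆ ≤ (C + 1) * ν g`; applying this twice bounds `ν ⁅φ, ψ⁆` by
`(C_φ + 1) * (C_ψ + 1) * ν θ`.
-/

open scoped commutatorElement

theorem commutatorElement_mul_right_of_commute {G : Type*} [Group G] {a c : G}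
    (h : Commute a c) (b : G) : ⁅a, b * c⁆ = ⁅a, b⁆ := by
  rw [commutatorElement_mul_right_eq_mul_conj, commutatorElement_eq_one_iff_commute.mpr h,
    mul_one, mul_inv_cancel_right]

theorem apply_commutatorElement_le {G : Type*} [Group G] (ν : G → ℝ)
    (hsub : ∀ g h, ν (g * h) ≤ ν g + ν h) (hsymm : ∀ g, ν g⁻¹ = ν g)
    {a : G} {C : ℝ} (ha : ∀ g, ν (a * g * a⁻¹) ≤ C * ν g) (g : G) :
    ν ⁅a, g⁆ ≤ (C + 1) * ν g :=
  calc ν ⁅a, g⁆ ≤ ν (a * g * a⁻¹) + ν g⁻¹ := hsub _ _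
    _ ≤ C * ν g + ν g := by rw [hsymm]; gcongr; exact ha g
    _ = (C + 1) * ν g := by ring

namespace Equiv.Perm

variable {X : Type*} {U : Set X}

theorem inv_apply_eq_self_of_forall_notMem {f : Perm X} (hf : ∀ x ∉ U, f x = x) :
    ∀ x ∉ U, f⁻¹ x = x := fun x hx =>
  inv_eq_iff_eq.mpr (hf x hx).symm

theorem conj_apply_eq_self_of_notMem_image {f : Perm X} (hf : ∀ x ∉ U, f x = x) (θ : Perm X) :
    ∀ x ∉ θ '' U, (θ * f * θ⁻¹) x = x := by
  intro x hx
  have hθx : θ⁻¹ x ∉ U := fun h => hx ⟨θ⁻¹ x, h, θ.apply_symm_apply x⟩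
  rw [mul_apply, mul_apply, hf _ hθx]
  exact θ.apply_symm_apply x

theorem disjoint_conj_of_image_inter_eq_empty {f g θ : Perm X} (hf : ∀ x ∉ U, f x = x)
    (hg : ∀ x ∉ U, g x = x) (hθ : θ '' U ∩ U = ∅) : Disjoint f (θ * g * θ⁻¹) := by
  intro x
  by_cases hx : x ∈ U
  · exact Or.inr (conj_apply_eq_self_of_notMem_image hg θ x fun h => hθ.subset ⟨h, hx⟩)
  · exact Or.inl (hf x hx)

end Equiv.Perm

theorem commutator_estimate_general {X : Type*} (ν : Equiv.Perm X → ℝ)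
    (hsub : ∀ g h, ν (g * h) ≤ ν g + ν h)
    (hsymm : ∀ g, ν g⁻¹ = ν g)
    (φ ψ : Equiv.Perm X) (Cφ Cψ : ℝ) (hCφ : 0 ≤ Cφ)
    (hφ : ∀ g, ν (φ * g * φ⁻¹) ≤ Cφ * ν g)
    (hψ : ∀ g, ν (ψ * g * ψ⁻¹) ≤ Cψ * ν g)
    (U : Set X)
    (hφU : ∀ x ∉ U, φ x = x) (hψU : ∀ x ∉ U, ψ x = x)
    (θ : Equiv.Perm X) (hθ : (⇑θ '' U) ∩ U = ∅) :
    ν (φ * ψ * φ⁻¹ * ψ⁻¹) ≤ (Cφ + 1) * (Cψ + 1) * ν θ := by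
  have hcomm : Commute φ (θ * ψ⁻¹ * θ⁻¹) :=
    (Equiv.Perm.disjoint_conj_of_image_inter_eq_empty hφU
      (Equiv.Perm.inv_apply_eq_self_of_forall_notMem hψU) hθ).commute
  have hcomm_eq : ⁅φ, ψ⁆ = ⁅φ, ⁅ψ, θ⁆⁆ := by
    rw [← commutatorElement_mul_right_of_commute hcomm ψ, commutatorElement_def ψ θ,
      mul_assoc ψ, mul_assoc ψ]
  calc ν ⁅φ, ψ⁆ = ν ⁅φ, ⁅ψ, θ⁆⁆ := by rw [hcomm_eq]
    _ ≤ (Cφ + 1) * ν ⁅ψ, θ⁆ := apply_commutatorElement_le ν hsub hsymm hφ _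
    _ ≤ (Cφ + 1) * ((Cψ + 1) * ν θ) := by
      gcongr
      exact apply_commutatorElement_le ν hsub hsymm hψ θ
    _ = (Cφ + 1) * (Cψ + 1) * ν θ := by ring

/-- The Eliashberg–Polterovich commutator estimate: if `ν` is a nonnegative, subadditive,
symmetric function on the group of bijections of `X`, quasi-invariant under conjugation by
`φ` and `ψ` with constants `C_φ, C_ψ ≥ 0`, `φ` and `ψ` are supported in `U ⊆ X`, and the
bijection `θ` displaces `U` (i.e. `θ(U) ∩ U = ∅`), then
`ν([φ,ψ]) ≤ (C_φ + 1)(C_ψ + 1) ν(θ)`. -/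
theorem commutator_estimate {X : Type*} (ν : Equiv.Perm X → ℝ)
    (hpos : ∀ g, 0 ≤ ν g)
    (hsub : ∀ g h, ν (g * h) ≤ ν g + ν h)
    (hsymm : ∀ g, ν g⁻¹ = ν g)
    (φ ψ : Equiv.Perm X) (Cφ Cψ : ℝ) (hCφ : 0 ≤ Cφ) (hCψ : 0 ≤ Cψ)
    (hφ : ∀ g, ν (φ * g * φ⁻¹) ≤ Cφ * ν g)
    (hψ : ∀ g, ν (ψ * g * ψ⁻¹) ≤ Cψ * ν g)
    (U : Set X)
    (hφU : ∀ x ∉ U, φ x = x) (hψU : ∀ x ∉ U, ψ x = x)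
    (θ : Equiv.Perm X) (hθ : (⇑θ '' U) ∩ U = ∅) :
    ν (φ * ψ * φ⁻¹ * ψ⁻¹) ≤ (Cφ + 1) * (Cψ + 1) * ν θ :=
  commutator_estimate_general ν hsub hsymm φ ψ Cφ Cψ hCφ hφ hψ U hφU hψU θ hθ
end

section
/- Let N be a nonempty compact topological space, F, G : [0,1] × N → ℝ continuous, and τ₁, τ₂ : [0,1] → [0,1] continuously differentiable functions with τ_j(0) = 0, τ_j(1) = 1, τ_j'(t) ≥ 0 for all t (j = 1, 2), τ₁'(t) = 0 for t ∈ [0, 1/2], and τ₂'(t) = 0 for t ∈ [1/2, 1]. Define H : [0,1] × N → ℝ by H(t,x) = τ₂'(t)·G(τ₂(t), x) + τ₁'(t)·F(τ₁(t), x). Then ∫₀¹ max_{x∈N} |H(t,x)| dt ≤ ∫₀¹ max_{x∈N} |F(t,x)| dt + ∫₀¹ max_{x∈N} |G(t,x)| dt. -/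
/-!
On `[0, 1/2]` only the `G`-term of `H` survives and on `[1/2, 1]` only the `F`-term. Pulling the
nonnegative factor `τⱼ'` out of the supremum and substituting `s = τⱼ(t)` turns each half into the
full integral of `G` resp. `F`, because `τ₂` runs from `0` to `1` on the first half and `τ₁` on the
second. So the inequality is in fact an equality.
-/

open Set MeasureTheory intervalIntegral

theorem continuous_iSup_abs {X N : Type*} [TopologicalSpace X] [TopologicalSpace N]
    [CompactSpace N] {F : X → N → ℝ} (hF : Continuous fun p : X × N => F p.1 p.2) :
    Continuous fun t => ⨆ x, |F t x| := by
  have hnorm : ∀ t, ⨆ x, |F t x| = ‖ContinuousMap.curry ⟨_, hF⟩ t‖ := fun t => by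
    rw [ContinuousMap.norm_eq_iSup_norm]
    rfl
  simpa only [hnorm] using (ContinuousMap.curry ⟨_, hF⟩).continuous.norm

theorem iSup_abs_mul_of_nonneg {ι : Sort*} {c : ℝ} (hc : 0 ≤ c) (g : ι → ℝ) :
    ⨆ x, |c * g x| = c * ⨆ x, |g x| := by
  simp only [abs_mul, abs_of_nonneg hc, Real.mul_iSup_of_nonneg hc]

theorem eq_of_hasDerivAt_eq_zero_on_Icc {f f' : ℝ → ℝ} {a b : ℝ} (hab : a ≤ b)
    (hf : ∀ t ∈ Icc a b, HasDerivAt f (f' t) t) (hf' : ∀ t ∈ Icc a b, f' t = 0) :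
    f b = f a :=
  constant_of_has_deriv_right_zero (fun t ht => (hf t ht).continuousAt.continuousWithinAt)
    (fun t ht => hf' t (Ico_subset_Icc_self ht) ▸ (hf t (Ico_subset_Icc_self ht)).hasDerivWithinAt)
    b (right_mem_Icc.2 hab)

section Reparametrization

variable {N : Type*} [TopologicalSpace N] [CompactSpace N] {g : ℝ → N → ℝ}
  {f f' : ℝ → ℝ} {a b : ℝ}

theorem continuousOn_iSup_abs_reparam (hg : Continuous fun p : ℝ × N => g p.1 p.2)
    (hf : ∀ t ∈ uIcc a b, HasDerivAt f (f' t) t) (hf'c : ContinuousOn f' (uIcc a b))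
    (hf'0 : ∀ t ∈ uIcc a b, 0 ≤ f' t) :
    ContinuousOn (fun t => ⨆ x, |f' t * g (f t) x|) (uIcc a b) := by
  have hfc : ContinuousOn f (uIcc a b) := fun t ht => (hf t ht).continuousAt.continuousWithinAt
  refine (hf'c.mul ((continuous_iSup_abs hg).comp_continuousOn hfc)).congr fun t ht => ?_
  exact iSup_abs_mul_of_nonneg (hf'0 t ht) _

theorem integral_iSup_abs_reparam (hg : Continuous fun p : ℝ × N => g p.1 p.2)
    (hf : ∀ t ∈ uIcc a b, HasDerivAt f (f' t) t) (hf'c : ContinuousOn f' (uIcc a b))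
    (hf'0 : ∀ t ∈ uIcc a b, 0 ≤ f' t) :
    ∫ t in a..b, ⨆ x, |f' t * g (f t) x| = ∫ s in f a..f b, ⨆ x, |g s x| := by
  rw [integral_congr fun t ht => iSup_abs_mul_of_nonneg (hf'0 t ht) _]
  exact integral_deriv_smul_comp hf hf'c (continuous_iSup_abs hg)

end Reparametrization

theorem concatenation_triangle_inequality_general {N : Type*} [TopologicalSpace N] [CompactSpace N]
    (F G : ℝ → N → ℝ)
    (hF : Continuous fun p : ℝ × N => F p.1 p.2)
    (hG : Continuous fun p : ℝ × N => G p.1 p.2)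
    (τ₁ τ₂ τ₁' τ₂' : ℝ → ℝ)
    (hderiv₁ : ∀ t ∈ Set.Icc (0:ℝ) 1, HasDerivAt τ₁ (τ₁' t) t)
    (hderiv₂ : ∀ t ∈ Set.Icc (0:ℝ) 1, HasDerivAt τ₂ (τ₂' t) t)
    (hcont₁ : ContinuousOn τ₁' (Set.Icc (0:ℝ) 1))
    (hcont₂ : ContinuousOn τ₂' (Set.Icc (0:ℝ) 1))
    (hτ₁0 : τ₁ 0 = 0) (hτ₁1 : τ₁ 1 = 1) (hτ₂0 : τ₂ 0 = 0) (hτ₂1 : τ₂ 1 = 1)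
    (hnonneg₁ : ∀ t ∈ Set.Icc (0:ℝ) 1, 0 ≤ τ₁' t)
    (hnonneg₂ : ∀ t ∈ Set.Icc (0:ℝ) 1, 0 ≤ τ₂' t)
    (hsupp₁ : ∀ t ∈ Set.Icc (0:ℝ) (1/2), τ₁' t = 0)
    (hsupp₂ : ∀ t ∈ Set.Icc (1/2:ℝ) 1, τ₂' t = 0)
    (H : ℝ → N → ℝ)
    (hHdef : ∀ t x, H t x = τ₂' t * G (τ₂ t) x + τ₁' t * F (τ₁ t) x) :
    (∫ t in (0:ℝ)..1, ⨆ x, |H t x|) ≤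
      (∫ t in (0:ℝ)..1, ⨆ x, |F t x|) + ∫ t in (0:ℝ)..1, ⨆ x, |G t x| := by
  have hI₁ : uIcc (0:ℝ) (1/2) = Icc 0 (1/2) := uIcc_of_le (by norm_num)
  have hI₂ : uIcc (1/2:ℝ) 1 = Icc (1/2) 1 := uIcc_of_le (by norm_num)
  have hsub₁ : uIcc (0:ℝ) (1/2) ⊆ Icc 0 1 := hI₁ ▸ Icc_subset_Icc le_rfl (by norm_num)
  have hsub₂ : uIcc (1/2:ℝ) 1 ⊆ Icc 0 1 := hI₂ ▸ Icc_subset_Icc (by norm_num) le_rfl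
  have hτ₁half : τ₁ (1/2) = 0 := (eq_of_hasDerivAt_eq_zero_on_Icc (by norm_num)
    (fun t ht => hderiv₁ t (hsub₁ (hI₁ ▸ ht))) hsupp₁).trans hτ₁0
  have hτ₂half : τ₂ (1/2) = 1 := (eq_of_hasDerivAt_eq_zero_on_Icc (by norm_num)
    (fun t ht => hderiv₂ t (hsub₂ (hI₂ ▸ ht))) hsupp₂).symm.trans hτ₂1
  have hH₁ : EqOn (fun t => ⨆ x, |H t x|) (fun t => ⨆ x, |τ₂' t * G (τ₂ t) x|)
      (uIcc 0 (1/2)) := fun t ht => by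
    simp only [hHdef, hsupp₁ t (hI₁ ▸ ht), zero_mul, add_zero]
  have hH₂ : EqOn (fun t => ⨆ x, |H t x|) (fun t => ⨆ x, |τ₁' t * F (τ₁ t) x|)
      (uIcc (1/2) 1) := fun t ht => by
    simp only [hHdef, hsupp₂ t (hI₂ ▸ ht), zero_mul, zero_add]
  have hG₁ := continuousOn_iSup_abs_reparam hG (fun t ht => hderiv₂ t (hsub₁ ht))
    (hcont₂.mono hsub₁) (fun t ht => hnonneg₂ t (hsub₁ ht))
  have hF₂ := continuousOn_iSup_abs_reparam hF (fun t ht => hderiv₁ t (hsub₂ ht))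
    (hcont₁.mono hsub₂) (fun t ht => hnonneg₁ t (hsub₂ ht))
  rw [← integral_add_adjacent_intervals
    (hG₁.intervalIntegrable.congr (hH₁.mono uIoc_subset_uIcc).symm)
    (hF₂.intervalIntegrable.congr (hH₂.mono uIoc_subset_uIcc).symm),
    integral_congr hH₁, integral_congr hH₂,
    integral_iSup_abs_reparam hG (fun t ht => hderiv₂ t (hsub₁ ht))
      (hcont₂.mono hsub₁) (fun t ht => hnonneg₂ t (hsub₁ ht)),
    integral_iSup_abs_reparam hF (fun t ht => hderiv₁ t (hsub₂ ht))
      (hcont₁.mono hsub₂) (fun t ht => hnonneg₁ t (hsub₂ ht)),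
    hτ₂0, hτ₂half, hτ₁half, hτ₁1, add_comm]

/-- For a nonempty compact space `N`, continuous `F, G : [0,1] × N → ℝ` and `C¹`
reparametrizations `τ₁, τ₂ : [0,1] → [0,1]` with `τ_j(0) = 0`, `τ_j(1) = 1`, `τ_j' ≥ 0`,
`τ₁' = 0` on `[0,1/2]` and `τ₂' = 0` on `[1/2,1]`, the concatenated Hamiltonian
`H(t,x) = τ₂'(t) G(τ₂(t),x) + τ₁'(t) F(τ₁(t),x)` satisfies
`∫₀¹ max_{x∈N} |H(t,x)| dt ≤ ∫₀¹ max_{x∈N} |F(t,x)| dt + ∫₀¹ max_{x∈N} |G(t,x)| dt`. -/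
theorem concatenation_triangle_inequality {N : Type*} [TopologicalSpace N] [CompactSpace N]
    [Nonempty N] (F G : ℝ → N → ℝ)
    (hF : Continuous fun p : ℝ × N => F p.1 p.2)
    (hG : Continuous fun p : ℝ × N => G p.1 p.2)
    (τ₁ τ₂ τ₁' τ₂' : ℝ → ℝ)
    (hderiv₁ : ∀ t ∈ Set.Icc (0:ℝ) 1, HasDerivAt τ₁ (τ₁' t) t)
    (hderiv₂ : ∀ t ∈ Set.Icc (0:ℝ) 1, HasDerivAt τ₂ (τ₂' t) t)
    (hcont₁ : ContinuousOn τ₁' (Set.Icc (0:ℝ) 1))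
    (hcont₂ : ContinuousOn τ₂' (Set.Icc (0:ℝ) 1))
    (hτ₁0 : τ₁ 0 = 0) (hτ₁1 : τ₁ 1 = 1) (hτ₂0 : τ₂ 0 = 0) (hτ₂1 : τ₂ 1 = 1)
    (hnonneg₁ : ∀ t ∈ Set.Icc (0:ℝ) 1, 0 ≤ τ₁' t)
    (hnonneg₂ : ∀ t ∈ Set.Icc (0:ℝ) 1, 0 ≤ τ₂' t)
    (hsupp₁ : ∀ t ∈ Set.Icc (0:ℝ) (1/2), τ₁' t = 0)
    (hsupp₂ : ∀ t ∈ Set.Icc (1/2:ℝ) 1, τ₂' t = 0)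
    (H : ℝ → N → ℝ)
    (hHdef : ∀ t x, H t x = τ₂' t * G (τ₂ t) x + τ₁' t * F (τ₁ t) x) :
    (∫ t in (0:ℝ)..1, ⨆ x, |H t x|) ≤
      (∫ t in (0:ℝ)..1, ⨆ x, |F t x|) + ∫ t in (0:ℝ)..1, ⨆ x, |G t x| :=
  concatenation_triangle_inequality_general F G hF hG τ₁ τ₂ τ₁' τ₂' hderiv₁ hderiv₂ hcont₁ hcont₂
    hτ₁0 hτ₁1 hτ₂0 hτ₂1 hnonneg₁ hnonneg₂ hsupp₁ hsupp₂ H hHdef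
end
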